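/- The family f_t(z₁,z₂) := e^t(z₁ + (3√3/2)z₂², z₂), for t ≥ 0 and (z₁,z₂) ∈ B², is a normal Loewner chain on B². In particular, the image Φ(B²), where Φ(z₁,z₂) = (z₁ + (3√3/2)z₂², z₂), is star-shaped with respect to the origin. -/

import Mathlib

open Complex

noncomputable section

/-- The open unit ball in `ℂ²`. -/
def B2 : Set (ℂ × ℂ) := {z | ‖z.1‖ ^ 2 + ‖z.2‖ ^ 2 < 1}

/-- A normal Loewner chain on `B²`: a family `(f_t)_{t ≥ 0}` of injective holomorphic maps
`f_t : B² → ℂ²` with increasing images, `f_t(0) = 0`, `d(f_t)₀ = e^t·id`, and such that the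
family `{e^{-t} f_t}` is uniformly bounded on every compact subset of `B²`. -/
def IsNormalLoewnerChain (f : ℝ → ℂ × ℂ → ℂ × ℂ) : Prop :=
  (∀ t, 0 ≤ t → DifferentiableOn ℂ (f t) B2) ∧
  (∀ t, 0 ≤ t → Set.InjOn (f t) B2) ∧
  (∀ s t, 0 ≤ s → s ≤ t → f s '' B2 ⊆ f t '' B2) ∧
  (∀ t, 0 ≤ t → f t 0 = 0) ∧
  (∀ t, 0 ≤ t → ∀ z : ℂ × ℂ, fderiv ℂ (f t) 0 z = Real.exp t • z) ∧
  (∀ K : Set (ℂ × ℂ), K ⊆ B2 → IsCompact K →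
    ∃ M : ℝ, ∀ t, 0 ≤ t → ∀ z ∈ K, ‖Real.exp (-t) • f t z‖ ≤ M)

/-- `f ∈ S⁰(B²)`: `f` admits parametric representation, i.e. `f` is (on `B²`) the initial
element of some normal Loewner chain. -/
def memS0 (f : ℂ × ℂ → ℂ × ℂ) : Prop :=
  ∃ F : ℝ → ℂ × ℂ → ℂ × ℂ, IsNormalLoewnerChain F ∧ ∀ z ∈ B2, F 0 z = f z

/-- The coefficient `a = (1/2)·∂²f₁/∂z₂²(0)` of `z₂²` in the first component of the Taylor
expansion of `f` at the origin. -/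
def shearCoef (f : ℂ × ℂ → ℂ × ℂ) : ℂ :=
  (1 / 2 : ℂ) * iteratedDeriv 2 (fun w : ℂ => (f (0, w)).1) 0

/-!
For `0 ≤ r ≤ 1` one has `r • Φ z = Φ w` with `w = (r z₁ + a r(1-r) z₂², r z₂)`, so `Φ(B²)` is
starlike as soon as this `w` stays in `B²`. Writing `x = ‖z₁‖`, `y = ‖z₂‖`, that reduces to
`(r x + |a| r(1-r) y²)² + r² y² ≤ x² + y²`. After factoring out `1 - r`, the remaining terms are of
degree 2, 3 and 4 in `(x, y)` with the higher ones negative, so the inequality is worst on the unit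
sphere, where it becomes a one-variable polynomial inequality with equality only at `r = 1`,
`x = 1/√3`; this is where the constant `3√3/2` comes from. A starlike normalized map `g` gives the
normal Loewner chain `e^t g`, since `e^{s-t} g(B²) ⊆ g(B²)` for `s ≤ t`.
-/

theorem isNormalLoewnerChain_exp_smul_of_starConvex {g : ℂ × ℂ → ℂ × ℂ}
    (hg : DifferentiableOn ℂ g B2) (hinj : Set.InjOn g B2) (hg0 : g 0 = 0)
    (hg' : HasFDerivAt g (ContinuousLinearMap.id ℂ (ℂ × ℂ)) 0)
    (hstar : StarConvex ℝ 0 (g '' B2)) :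
    IsNormalLoewnerChain (fun t z => Real.exp t • g z) := by
  refine ⟨fun t _ => hg.fun_const_smul _, fun t _ z hz w hw h => hinj hz hw ?_, ?_,
    fun t _ => by simp [hg0], fun t _ z => by simp [(hg'.fun_const_smul (Real.exp t)).fderiv], ?_⟩
  · exact smul_right_injective (ℂ × ℂ) (Real.exp_pos t).ne' h
  · rintro s t - hst _ ⟨z, hz, rfl⟩
    obtain ⟨w, hw, hwz⟩ := starConvex_zero_iff.1 hstar (Set.mem_image_of_mem g hz)
      (Real.exp_pos (s - t)).le (Real.exp_le_one_iff.2 (by linarith))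
    refine ⟨w, hw, ?_⟩
    simp only [hwz, smul_smul, ← Real.exp_add, add_sub_cancel]
  · intro K hKB hK
    obtain ⟨C, hC⟩ := hK.exists_bound_of_continuousOn (hg.continuousOn.mono hKB)
    refine ⟨C, fun t _ z hz => ?_⟩
    simpa only [smul_smul, ← Real.exp_add, neg_add_cancel, Real.exp_zero, one_smul] using hC z hz

lemma sphere_poly_bound_of_one_le {v r : ℝ} (hv : 1 ≤ v) (hv3 : v ^ 2 ≤ 3) (hr0 : 0 ≤ r)
    (hr1 : r ≤ 1) : r ^ 2 * (4 * v * (3 - v ^ 2) + 3 * (1 - r) * (3 - v ^ 2) ^ 2) ≤ 4 * (1 + r) := by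
  have hq : (3 - v ^ 2) ^ 2 ≤ 4 := by
    nlinarith [mul_nonneg (sub_nonneg.2 hv3) (by nlinarith : (0 : ℝ) ≤ v ^ 2 - 1)]
  have h1 : 0 ≤ (1 - r) * (4 * (1 + 2 * r) - 3 * r ^ 2 * (3 - v ^ 2) ^ 2) :=
    mul_nonneg (by linarith) (by nlinarith)
  -- `4(1+r) - lhs` is `h1`'s product plus `4r²(v-1)²(v+2)`
  nlinarith [mul_nonneg (mul_nonneg (sq_nonneg r) (sq_nonneg (v - 1))) (by linarith : 0 ≤ v + 2)]

lemma sphere_poly_bound_of_le_one {v r : ℝ} (hv0 : 0 ≤ v) (hv1 : v ≤ 1) (hr0 : 0 ≤ r)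
    (hr1 : r ≤ 1) : r ^ 2 * (4 * v * (3 - v ^ 2) + 3 * (1 - r) * (3 - v ^ 2) ^ 2) ≤ 4 * (1 + r) := by
  obtain ⟨u, rfl⟩ : ∃ u, v = 1 - u := ⟨1 - v, by ring⟩
  have hu0 : 0 ≤ u := by linarith
  have hu1 : u ≤ 1 := by linarith
  have key : 0 ≤ (1 - r) ^ 2 * (1 + 3 * r) + r ^ 2 * u ^ 2 * (3 - u) - 6 * r ^ 2 * (1 - r) * u := by
    nlinarith [mul_nonneg hr0 (sq_nonneg ((1 - r) * 2 - r * u)),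
      mul_nonneg (sub_nonneg.2 hr1) (sq_nonneg ((1 - r) - r * u)),
      mul_nonneg (mul_nonneg hr0 hr0) (mul_nonneg (mul_nonneg hu0 hu0) (sub_nonneg.2 hu1)),
      mul_nonneg (sub_nonneg.2 hr1) hr0]
  have hcubic : 0 ≤ r ^ 2 * (1 - r) * (u ^ 3 * (3 - 3 * u / 4)) :=
    mul_nonneg (mul_nonneg (sq_nonneg r) (sub_nonneg.2 hr1))
      (mul_nonneg (pow_nonneg hu0 3) (by linarith))
  -- `(4(1+r) - lhs) / 4` is `key`'s expression plus `hcubic`'s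
  nlinarith [key, hcubic]

lemma sphere_poly_bound {v r : ℝ} (hv0 : 0 ≤ v) (hv3 : v ^ 2 ≤ 3) (hr0 : 0 ≤ r) (hr1 : r ≤ 1) :
    r ^ 2 * (4 * v * (3 - v ^ 2) + 3 * (1 - r) * (3 - v ^ 2) ^ 2) ≤ 4 * (1 + r) := by
  rcases le_total v 1 with hv1 | hv1
  · exact sphere_poly_bound_of_le_one hv0 hv1 hr0 hr1
  · exact sphere_poly_bound_of_one_le hv1 hv3 hr0 hr1

lemma sphere_bound {p q r : ℝ} (hp : 0 ≤ p) (hpq : p ^ 2 + q ^ 2 = 1) (hr0 : 0 ≤ r)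
    (hr1 : r ≤ 1) :
    12 * √3 * r ^ 2 * p * q ^ 2 + 27 * r ^ 2 * (1 - r) * q ^ 4 ≤ 4 * (1 + r) := by
  have h3 : √3 ^ 2 = 3 := Real.sq_sqrt (by norm_num)
  have h := sphere_poly_bound (v := √3 * p) (by positivity)
    (by nlinarith [sq_nonneg q]) hr0 hr1
  have hv : 3 - (√3 * p) ^ 2 = 3 * q ^ 2 := by linear_combination (-p ^ 2) * h3 - 3 * hpq
  rw [hv] at h
  linarith

lemma disc_bound {x y r : ℝ} (hx : 0 ≤ x) (hs : x ^ 2 + y ^ 2 ≤ 1) (hr0 : 0 ≤ r) (hr1 : r ≤ 1) :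
    12 * √3 * r ^ 2 * x * y ^ 2 + 27 * r ^ 2 * (1 - r) * y ^ 4 ≤ 4 * (1 + r) * (x ^ 2 + y ^ 2) := by
  rcases (add_nonneg (sq_nonneg x) (sq_nonneg y)).eq_or_lt with hs0 | hs0
  · obtain rfl : x = 0 := by nlinarith [sq_nonneg y]
    obtain rfl : y = 0 := by nlinarith
    simp
  set σ := √(x ^ 2 + y ^ 2)
  have hσ : 0 < σ := Real.sqrt_pos.2 hs0
  have hσ2 : σ ^ 2 = x ^ 2 + y ^ 2 := Real.sq_sqrt hs0.le
  have hσ1 : σ ≤ 1 := Real.sqrt_le_one.2 hs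
  have h := sphere_bound (p := x / σ) (q := y / σ) (by positivity)
    (by rw [div_pow, div_pow, ← add_div, hσ2, div_self hs0.ne']) hr0 hr1
  have hscaled : (12 * √3 * r ^ 2 * x * y ^ 2) * σ + 27 * r ^ 2 * (1 - r) * y ^ 4
      ≤ 4 * (1 + r) * (x ^ 2 + y ^ 2) * σ ^ 2 := by
    have := mul_le_mul_of_nonneg_right h (pow_nonneg hσ.le 4)
    field_simp at this
    linear_combination this + 4 * (1 + r) * σ ^ 2 * hσ2
  have hA : 0 ≤ 12 * √3 * r ^ 2 * x * y ^ 2 := by positivity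
  have hB : 0 ≤ 27 * r ^ 2 * (1 - r) * y ^ 4 := mul_nonneg (by nlinarith) (by positivity)
  -- as `σ ≤ 1`, the cubic term carries the larger factor `σ ≥ σ²` and the quartic one `1 ≥ σ²`
  nlinarith [mul_le_mul_of_nonneg_left (by nlinarith : σ ^ 2 ≤ σ) hA,
    mul_le_mul_of_nonneg_left (by nlinarith : σ ^ 2 ≤ 1) hB]

lemma retraction_bound {c x y r : ℝ} (hc0 : 0 ≤ c) (hc : c ≤ 3 * √3 / 2) (hx : 0 ≤ x)
    (hs : x ^ 2 + y ^ 2 ≤ 1) (hr0 : 0 ≤ r) (hr1 : r ≤ 1) :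
    (r * x + c * (r * (1 - r)) * y ^ 2) ^ 2 + (r * y) ^ 2 ≤ x ^ 2 + y ^ 2 := by
  have h3 : √3 ^ 2 = 3 := Real.sq_sqrt (by norm_num)
  have hc2 : 4 * c ^ 2 ≤ 27 := by nlinarith
  have hxy : 0 ≤ r ^ 2 * x * y ^ 2 := by positivity
  have hy4 : 0 ≤ r ^ 2 * (1 - r) * y ^ 4 := mul_nonneg (by nlinarith) (by positivity)
  have hdisc := disc_bound hx hs hr0 hr1
  have hbracket : 0 ≤ 4 * (1 + r) * (x ^ 2 + y ^ 2) - 8 * c * (r ^ 2 * x * y ^ 2)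
      - 4 * c ^ 2 * (r ^ 2 * (1 - r) * y ^ 4) := by
    nlinarith [mul_le_mul_of_nonneg_right (by linarith : 8 * c ≤ 12 * √3) hxy,
      mul_le_mul_of_nonneg_right hc2 hy4]
  nlinarith [mul_nonneg (sub_nonneg.2 hr1) hbracket]

def shear (a : ℂ) (z : ℂ × ℂ) : ℂ × ℂ := (z.1 + a * z.2 ^ 2, z.2)

def shearRetraction (a : ℂ) (r : ℝ) (z : ℂ × ℂ) : ℂ × ℂ :=
  (r * z.1 + a * (r * (1 - r) : ℝ) * z.2 ^ 2, r * z.2)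

lemma shear_shearRetraction (a : ℂ) (r : ℝ) (z : ℂ × ℂ) :
    shear a (shearRetraction a r z) = r • shear a z := by
  ext <;> simp only [shear, shearRetraction, Prod.smul_mk, Complex.real_smul]
  push_cast
  ring

lemma shearRetraction_mem_B2 {a : ℂ} (ha : ‖a‖ ≤ 3 * √3 / 2) {z : ℂ × ℂ} (hz : z ∈ B2)
    {r : ℝ} (hr0 : 0 ≤ r) (hr1 : r ≤ 1) : shearRetraction a r z ∈ B2 := by
  have hz' : ‖z.1‖ ^ 2 + ‖z.2‖ ^ 2 < 1 := hz
  have hr : ‖(r : ℂ)‖ = r := by rw [Complex.norm_real, Real.norm_of_nonneg hr0]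
  have hfst : ‖(shearRetraction a r z).1‖ ≤ r * ‖z.1‖ + ‖a‖ * (r * (1 - r)) * ‖z.2‖ ^ 2 := by
    refine (norm_add_le _ _).trans_eq ?_
    rw [norm_mul, norm_mul, norm_mul, norm_pow, hr, Complex.norm_real,
      Real.norm_of_nonneg (mul_nonneg hr0 (sub_nonneg.2 hr1))]
  have hsnd : ‖(shearRetraction a r z).2‖ = r * ‖z.2‖ := by
    rw [shearRetraction, norm_mul, hr]
  have hbound := retraction_bound (norm_nonneg a) ha (norm_nonneg z.1) hz'.le hr0 hr1
  show ‖_‖ ^ 2 + ‖_‖ ^ 2 < 1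
  rw [hsnd]
  nlinarith [pow_le_pow_left₀ (norm_nonneg _) hfst 2]

theorem starConvex_shear_image {a : ℂ} (ha : ‖a‖ ≤ 3 * √3 / 2) :
    StarConvex ℝ 0 (shear a '' B2) := by
  rw [starConvex_zero_iff]
  rintro _ ⟨z, hz, rfl⟩ r hr0 hr1
  exact ⟨_, shearRetraction_mem_B2 ha hz hr0 hr1, shear_shearRetraction a r z⟩

lemma shear_injective (a : ℂ) : Function.Injective (shear a) := by
  intro z w h
  simp only [shear, Prod.mk.injEq] at h
  obtain ⟨h1, h2⟩ := h
  rw [h2, add_left_inj] at h1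
  exact Prod.ext h1 h2

lemma differentiable_shear (a : ℂ) : Differentiable ℂ (shear a) :=
  (differentiable_fst.add ((differentiable_snd.pow 2).const_mul a)).prodMk differentiable_snd

lemma hasFDerivAt_shear_zero (a : ℂ) :
    HasFDerivAt (shear a) (ContinuousLinearMap.id ℂ (ℂ × ℂ)) 0 := by
  have h := (hasFDerivAt_fst.add ((hasFDerivAt_snd.pow 2).const_mul a)).prodMk
    (hasFDerivAt_snd (𝕜 := ℂ) (E := ℂ) (F := ℂ) (p := 0))
  exact h.congr_fderiv (by ext <;> simp)

/-- The family `f_t = e^t Φ`, with `Φ(z₁,z₂) = (z₁ + (3√3/2) z₂², z₂)`, is a normal Loewner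
chain on `B²`; in particular `Φ(B²)` is star-shaped with respect to the origin. -/
theorem Phi_chain_and_starlike :
    IsNormalLoewnerChain (fun t z =>
      Real.exp t • (((z.1 + ((3 * Real.sqrt 3 / 2 : ℝ) : ℂ) * z.2 ^ 2, z.2)) : ℂ × ℂ)) ∧
    StarConvex ℝ (0 : ℂ × ℂ)
      ((fun z : ℂ × ℂ => (z.1 + ((3 * Real.sqrt 3 / 2 : ℝ) : ℂ) * z.2 ^ 2, z.2)) '' B2) := by
  have ha : ‖((3 * √3 / 2 : ℝ) : ℂ)‖ ≤ 3 * √3 / 2 := by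
    rw [Complex.norm_real, Real.norm_of_nonneg (by positivity)]
  have hstar := starConvex_shear_image ha
  exact ⟨isNormalLoewnerChain_exp_smul_of_starConvex (differentiable_shear _).differentiableOn
    (shear_injective _).injOn (by simp) (hasFDerivAt_shear_zero _) hstar, hstar⟩
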